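/- arXiv:1810.08964 — 3 statements merged into one kernel-verified Lean document; each statement's English description precedes it below -/
import Mathlib

section
/- Let $A$ generate an analytic semigroup on a Banach space $X$ and let $\mathbb{P} \in \mathcal{L}(D(A), X)$ be a $p$-admissible observation operator for $A$ with $p \in (1, \infty)$. Then for every $\delta > 0$ there exists $c_\delta > 0$ such that $\|\mathbb{P} x\| \le \delta \|Ax\| + c_\delta \|x\|$ for all $x \in D(A)$; that is, $\mathbb{P}$ is an $A$-small (relatively bounded with relative bound zero) perturbation. -/
set_option maxHeartbeats 1000000


open MeasureTheory Set Filter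

noncomputable section

/-- A strongly continuous (C₀-) semigroup of bounded operators on `X`. -/
def IsC0Semigroup {X : Type*} [NormedAddCommGroup X] [NormedSpace ℂ X]
    (T : ℝ → X →L[ℂ] X) : Prop :=
  T 0 = 1 ∧ (∀ s t : ℝ, 0 ≤ s → 0 ≤ t → T (s + t) = (T s).comp (T t)) ∧
    ∀ x : X, ContinuousOn (fun t => T t x) (Ici (0 : ℝ))

/-- `A : D ⊆ X → X` is the (infinitesimal) generator of the semigroup `T`. -/
def IsGenerator {X : Type*} [NormedAddCommGroup X] [NormedSpace ℂ X]
    (T : ℝ → X →L[ℂ] X) (D : Submodule ℂ X) (A : ↥D →ₗ[ℂ] X) : Prop :=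
  (∀ x : X, x ∈ D ↔ ∃ y : X, Tendsto (fun t : ℝ => (t : ℂ)⁻¹ • (T t x - x))
      (nhdsWithin 0 (Ioi 0)) (nhds y)) ∧
    ∀ x : ↥D, Tendsto (fun t : ℝ => (t : ℂ)⁻¹ • (T t (x : X) - (x : X)))
      (nhdsWithin 0 (Ioi 0)) (nhds (A x))

/-- `R` is the resolvent operator `R(lam, A) = (lam - A)⁻¹` of `A`. -/
def IsResolvent {X : Type*} [NormedAddCommGroup X] [NormedSpace ℂ X]
    (D : Submodule ℂ X) (A : ↥D →ₗ[ℂ] X) (lam : ℂ) (R : X →L[ℂ] X) : Prop :=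
  (∀ x : X, ∃ h : R x ∈ D, lam • R x - A ⟨R x, h⟩ = x) ∧
    ∀ x : ↥D, R (lam • (x : X) - A x) = x

/-- `A` generates an analytic semigroup, expressed through the classical
half-plane resolvent estimate `‖R(lam,A)‖ ≤ M / |lam - ω|`. -/
def GeneratesAnalytic {X : Type*} [NormedAddCommGroup X] [NormedSpace ℂ X]
    (D : Submodule ℂ X) (A : ↥D →ₗ[ℂ] X) : Prop :=
  ∃ (R : ℂ → X →L[ℂ] X) (ω M : ℝ), 0 < M ∧ ∀ lam : ℂ, ω < lam.re →
    IsResolvent D A lam (R lam) ∧ ∀ x : X, ‖R lam x‖ ≤ M / ‖lam - ω‖ * ‖x‖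

/-- `C ∈ 𝓛(D(A), U)`: the observation operator is bounded for the graph norm. -/
def GraphBounded {X U : Type*} [NormedAddCommGroup X] [NormedSpace ℂ X]
    [NormedAddCommGroup U] [NormedSpace ℂ U]
    (D : Submodule ℂ X) (A : ↥D →ₗ[ℂ] X) (C : X →ₗ[ℂ] U) : Prop :=
  ∃ c : ℝ, ∀ x : ↥D, ‖C (x : X)‖ ≤ c * (‖(x : X)‖ + ‖A x‖)

/-- `C` is a `p`-admissible observation operator for the semigroup `T` with
generator domain `D`. -/
def PAdmissibleObs {X U : Type*} [NormedAddCommGroup X] [NormedSpace ℂ X]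
    [NormedAddCommGroup U] [NormedSpace ℂ U]
    (T : ℝ → X →L[ℂ] X) (D : Submodule ℂ X) (C : X →ₗ[ℂ] U) (p : ℝ) : Prop :=
  ∃ α κ : ℝ, 0 < α ∧ 0 < κ ∧ ∀ x ∈ D,
    (∫ t in Ioc (0 : ℝ) α, ‖C (T t x)‖ ^ p) ≤ κ ^ p * ‖x‖ ^ p

/-- Maximal `L^p`-regularity on `[0, T0]` of the generator `A` of the semigroup `T`:
the semigroup is analytic and the operator `(𝓡 f)(t) = A ∫₀ᵗ T(t-s) f(s) ds`
is bounded in the `L^p([0,T0],X)` norm. -/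
def HasMaximalLpRegularity {X : Type*} [NormedAddCommGroup X] [NormedSpace ℂ X]
    (T : ℝ → X →L[ℂ] X) (D : Submodule ℂ X) (A : ↥D →ₗ[ℂ] X) (p T0 : ℝ) : Prop :=
  GeneratesAnalytic D A ∧ ∃ c : ℝ, 0 ≤ c ∧ ∀ f : ℝ → X, Continuous f → (∀ t, f t ∈ D) →
    ∃ g : ℝ → X, (∀ t ∈ Icc (0 : ℝ) T0, ∃ h : (∫ s in (0 : ℝ)..t, T (t - s) (f s)) ∈ D,
        g t = A ⟨∫ s in (0 : ℝ)..t, T (t - s) (f s), h⟩) ∧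
      (∫ t in Ioc (0 : ℝ) T0, ‖g t‖ ^ p) ≤ c * ∫ t in Ioc (0 : ℝ) T0, ‖f t‖ ^ p

/-- The Rademacher functions on `[0,1]` (valued in `ℂ` for convenience). -/
def rademacher (j : ℕ) (s : ℝ) : ℂ := (-1 : ℂ) ^ ⌊s * 2 ^ (j + 1)⌋

/-- A set of operators is `𝓡`-bounded. -/
def RBounded {X U : Type*} [NormedAddCommGroup X] [NormedSpace ℂ X]
    [NormedAddCommGroup U] [NormedSpace ℂ U] (𝒯 : Set (X →L[ℂ] U)) : Prop :=
  ∃ Cr : ℝ, 0 ≤ Cr ∧ ∀ (n : ℕ) (Top : Fin n → X →L[ℂ] U) (x : Fin n → X),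
    (∀ i, Top i ∈ 𝒯) →
    (∫ s in Ioc (0 : ℝ) 1, ‖∑ i, rademacher i.val s • Top i (x i)‖) ≤
      Cr * ∫ s in Ioc (0 : ℝ) 1, ‖∑ i, rademacher i.val s • x i‖

/-- `X` is a UMD space: the (truncated) Hilbert transform is uniformly bounded on
`L^p(ℝ, X)` over smooth compactly supported functions. -/
def IsUMD (X : Type*) [NormedAddCommGroup X] [NormedSpace ℂ X] (p : ℝ) : Prop :=
  ∃ Ch : ℝ, 0 ≤ Ch ∧ ∀ f : ℝ → X, ContDiff ℝ (⊤ : ℕ∞) f → HasCompactSupport f → ∀ ε > 0,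
    (∫ t : ℝ, ‖∫ s in {s : ℝ | ε < |s|}, ((s : ℂ))⁻¹ • f (t - s)‖ ^ p) ≤
      Ch * ∫ t : ℝ, ‖f t‖ ^ p

section Aux
variable {X : Type*} [NormedAddCommGroup X] [NormedSpace ℂ X]
variable {T : ℝ → X →L[ℂ] X} {D : Submodule ℂ X} {A : ↥D →ₗ[ℂ] X}

/-- key limit -/
lemma Tlim (hT : IsC0Semigroup T) (hgen : IsGenerator T D A) (x : ↥D) {t : ℝ} (ht : 0 ≤ t) :
    Tendsto (fun s : ℝ => (s : ℂ)⁻¹ • (T s (T t (x : X)) - T t (x : X)))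
      (nhdsWithin 0 (Ioi 0)) (nhds (T t (A x))) := by
  have hcong : ∀ s ∈ Ioi (0:ℝ),
      T t ((s : ℂ)⁻¹ • (T s (x : X) - (x : X))) = (s : ℂ)⁻¹ • (T s (T t (x : X)) - T t (x : X)) := by
    intro s hs
    have h1 : T s (T t (x : X)) = T t (T s (x : X)) := by
      rw [← ContinuousLinearMap.comp_apply, ← hT.2.1 s t (le_of_lt hs) ht, add_comm,
        hT.2.1 t s ht (le_of_lt hs), ContinuousLinearMap.comp_apply]
    rw [_root_.map_smul, map_sub, h1]
  have := (((T t).continuous.tendsto _).comp (hgen.2 x))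
  refine this.congr' ?_
  filter_upwards [self_mem_nhdsWithin] with s hs using hcong s hs

lemma Tmem (hT : IsC0Semigroup T) (hgen : IsGenerator T D A) (x : ↥D) {t : ℝ} (ht : 0 ≤ t) :
    T t (x : X) ∈ D :=
  (hgen.1 _).2 ⟨T t (A x), Tlim hT hgen x ht⟩

lemma TmemA (hT : IsC0Semigroup T) (hgen : IsGenerator T D A) (x : ↥D) {t : ℝ} (ht : 0 ≤ t)
    (h : T t (x : X) ∈ D) : A ⟨T t (x : X), h⟩ = T t (A x) :=
  tendsto_nhds_unique (hgen.2 ⟨T t (x : X), h⟩) (Tlim hT hgen x ht)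

end Aux

section Aux2
variable {X : Type*} [NormedAddCommGroup X] [NormedSpace ℂ X]
variable {T : ℝ → X →L[ℂ] X} {D : Submodule ℂ X} {A : ↥D →ₗ[ℂ] X}

lemma unif_bound [CompleteSpace X] (hT : IsC0Semigroup T) (α : ℝ) :
    ∃ M : ℝ, 1 ≤ M ∧ ∀ t ∈ Icc (0:ℝ) α, ‖T t‖ ≤ M := by
  have hb : ∀ x : X, ∃ C, ∀ i : ↥(Icc (0:ℝ) α), ‖T i x‖ ≤ C := by
    intro x
    obtain ⟨C, hC⟩ := isCompact_Icc.exists_bound_of_continuousOn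
      ((hT.2.2 x).mono (Icc_subset_Ici_self))
    exact ⟨C, fun i => hC i i.2⟩
  obtain ⟨C', hC'⟩ := banach_steinhaus hb
  exact ⟨max C' 1, le_max_right _ _, fun t ht => le_trans (hC' ⟨t, ht⟩) (le_max_left _ _)⟩

lemma rderiv (hT : IsC0Semigroup T) (hgen : IsGenerator T D A) (x : ↥D) {t : ℝ} (ht : 0 ≤ t) :
    HasDerivWithinAt (fun u => T u (x : X)) (T t (A x)) (Ioi t) t := by
  rw [hasDerivWithinAt_iff_tendsto_slope' (notMem_Ioi.2 le_rfl)]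
  have h1 : Tendsto (fun u : ℝ => u - t) (nhdsWithin t (Ioi t)) (nhdsWithin 0 (Ioi 0)) := by
    refine tendsto_nhdsWithin_of_tendsto_nhds_of_eventually_within _ ?_ ?_
    · have : Tendsto (fun u : ℝ => u - t) (nhds t) (nhds (t - t)) :=
        (continuous_id.sub continuous_const).tendsto t
      rw [sub_self] at this
      exact this.mono_left nhdsWithin_le_nhds
    · filter_upwards [self_mem_nhdsWithin] with u hu
      exact sub_pos.2 (show t < u from hu)
  have h2 := (Tlim hT hgen x ht).comp h1
  refine h2.congr' ?_
  filter_upwards [self_mem_nhdsWithin] with u hu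
  have hut : (0:ℝ) ≤ u - t := sub_nonneg.2 (le_of_lt hu)
  have h3 : T u (x : X) = T (u - t) (T t (x : X)) := by
    rw [← ContinuousLinearMap.comp_apply, ← hT.2.1 (u - t) t hut ht, sub_add_cancel]
  show ((u - t : ℝ) : ℂ)⁻¹ • (T (u - t) (T t (x : X)) - T t (x : X)) = slope (fun u => T u (x : X)) t u
  rw [slope_def_module, h3, ← Complex.ofReal_inv, Complex.coe_smul]

end Aux2

section Aux3
variable {X : Type*} [NormedAddCommGroup X] [NormedSpace ℂ X]
variable {T : ℝ → X →L[ℂ] X} {D : Submodule ℂ X} {A : ↥D →ₗ[ℂ] X}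

lemma ftc_ident [CompleteSpace X] (hT : IsC0Semigroup T) (hgen : IsGenerator T D A)
    (x : ↥D) {l α : ℝ} (hα : 0 ≤ α) :
    ∫ t in (0:ℝ)..α, Real.exp (-(l*t)) • T t (l • (x : X) - A x)
      = (x : X) - Real.exp (-(l*α)) • T α (x : X) := by
  set g : ℝ → X := fun t => Real.exp (-(l*t)) • T t (x : X) with hg
  set f' : ℝ → X := fun t => -(Real.exp (-(l*t)) • T t (l • (x : X) - A x)) with hf'
  have hTcont : ∀ y : X, ContinuousOn (fun t => T t y) (Icc 0 α) :=
    fun y => (hT.2.2 y).mono Icc_subset_Ici_self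
  have hecont : Continuous (fun t : ℝ => Real.exp (-(l*t))) := by continuity
  have hder : ∀ t ∈ Ioo (0:ℝ) α, HasDerivWithinAt g (f' t) (Ioi t) t := by
    intro t ht
    have hc : HasDerivWithinAt (fun t : ℝ => Real.exp (-(l*t)))
        (Real.exp (-(l*t)) * (-l)) (Ioi t) t := by
      have h0 : HasDerivAt (fun t : ℝ => -(l*t)) (-l) t := by
        simpa using ((hasDerivAt_id t).const_mul (-l))
      exact ((Real.hasDerivAt_exp (-(l*t))).comp t h0).hasDerivWithinAt
    have hv := rderiv hT hgen x (le_of_lt ht.1)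
    have := hc.smul hv
    refine this.congr_deriv ?_
    show _ = -(Real.exp (-(l*t)) • T t (l • (x : X) - A x))
    have hTs : T t (l • (x : X) - A x) = l • T t (x : X) - T t (A x) := by
      rw [map_sub, (T t).map_smul_of_tower]
    rw [hTs, smul_sub, neg_sub, smul_smul]
    module
  have hcont : ContinuousOn g (Icc 0 α) := (hecont.continuousOn).smul (hTcont _)
  have hint : IntervalIntegrable f' MeasureTheory.volume 0 α := by
    apply ContinuousOn.intervalIntegrable
    rw [uIcc_of_le hα]
    exact ((hecont.continuousOn).smul (hTcont _)).neg
  have := intervalIntegral.integral_eq_sub_of_hasDeriv_right_of_le hα hcont hder hint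
  have h2 : ∫ t in (0:ℝ)..α, Real.exp (-(l*t)) • T t (l • (x : X) - A x)
      = -∫ t in (0:ℝ)..α, f' t := by
    rw [← intervalIntegral.integral_neg]
    congr 1; funext t; rw [hf']; ring_nf; rw [neg_neg]
  rw [h2, this, hg]
  simp only [mul_zero, neg_zero, Real.exp_zero, one_smul, hT.1]
  rw [ContinuousLinearMap.one_apply, neg_sub]

end Aux3

section Aux4
variable {X : Type*} [NormedAddCommGroup X] [NormedSpace ℂ X]
variable {T : ℝ → X →L[ℂ] X} {D : Submodule ℂ X} {A : ↥D →ₗ[ℂ] X}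

lemma graph_closed (hanal : GeneratesAnalytic D A) :
    IsClosed ((LinearMap.range (LinearMap.prod D.subtype A) : Submodule ℂ (X × X)) : Set (X × X)) := by
  obtain ⟨R, ω, M, hM, hres⟩ := hanal
  set lam : ℂ := ((ω + 1 : ℝ) : ℂ) with hlamdef
  have hlam : ω < lam.re := by simp [hlamdef]
  obtain ⟨hres1, hres2⟩ := (hres lam hlam).1
  apply IsSeqClosed.isClosed
  intro f pt hf hlim
  choose d hd using hf
  have hfst : Tendsto (fun n => (f n).1) atTop (nhds pt.1) :=
    (continuous_fst.tendsto pt).comp hlim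
  have hsnd : Tendsto (fun n => (f n).2) atTop (nhds pt.2) :=
    (continuous_snd.tendsto pt).comp hlim
  have hd1 : ∀ n, ((d n : X), A (d n)) = f n := fun n => hd n
  have hkey : ∀ n, (f n).1 = R lam (lam • (f n).1 - (f n).2) := by
    intro n
    have := hres2 (d n)
    rw [← hd1 n]
    exact this.symm
  have h1 : Tendsto (fun n => (f n).1) atTop (nhds (R lam (lam • pt.1 - pt.2))) := by
    have : Tendsto (fun n => R lam (lam • (f n).1 - (f n).2)) atTop
        (nhds (R lam (lam • pt.1 - pt.2))) :=
      ((R lam).continuous.tendsto _).comp ((hfst.const_smul lam).sub hsnd)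
    exact this.congr (fun n => (hkey n).symm)
  have hpt1 : pt.1 = R lam (lam • pt.1 - pt.2) := tendsto_nhds_unique hfst h1
  obtain ⟨hmem, heq⟩ := hres1 (lam • pt.1 - pt.2)
  refine ⟨⟨R lam (lam • pt.1 - pt.2), hmem⟩, ?_⟩
  have h2 : A ⟨R lam (lam • pt.1 - pt.2), hmem⟩ = pt.2 := by
    have : lam • R lam (lam • pt.1 - pt.2) = lam • pt.1 := by rw [← hpt1]
    rw [this] at heq
    exact sub_right_inj.mp heq
  show ((R lam (lam • pt.1 - pt.2) : X), A ⟨R lam (lam • pt.1 - pt.2), hmem⟩) = pt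
  rw [h2, ← hpt1]

end Aux4

/-- a `p`-admissible observation operator for the generator of an
analytic semigroup is an `A`-small perturbation (relative bound zero). -/
theorem statement2
    {X : Type*} [NormedAddCommGroup X] [NormedSpace ℂ X] [CompleteSpace X]
    (p : ℝ) (hp : 1 < p)
    (T : ℝ → X →L[ℂ] X) (hT : IsC0Semigroup T)
    (D : Submodule ℂ X) (A : ↥D →ₗ[ℂ] X) (hgen : IsGenerator T D A)
    (hanal : GeneratesAnalytic D A)
    (P : X →ₗ[ℂ] X) (hP : GraphBounded D A P)
    (hadm : PAdmissibleObs T D P p) :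
    ∀ δ > (0:ℝ), ∃ c : ℝ, 0 < c ∧ ∀ x : ↥D,
      ‖P (x : X)‖ ≤ δ * ‖A x‖ + c * ‖(x : X)‖ := by
  intro δ hδ
  obtain ⟨c₀, hc₀⟩ := hP
  set c₁ : ℝ := max c₀ 0 with hc₁def
  have hc₁0 : 0 ≤ c₁ := le_max_right _ _
  have hc₁ : ∀ x : ↥D, ‖P (x : X)‖ ≤ c₁ * (‖(x : X)‖ + ‖A x‖) := fun x =>
    (hc₀ x).trans (mul_le_mul_of_nonneg_right (le_max_left _ _) (by positivity))
  obtain ⟨α, κ, hα, hκ, hadm'⟩ := hadm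
  obtain ⟨M₁, hM₁1, hM₁⟩ := unif_bound hT α
  have hM₁0 : 0 ≤ M₁ := zero_le_one.trans hM₁1
  -- the graph of A as a closed submodule of X × X
  set G : Submodule ℂ (X × X) := LinearMap.range (LinearMap.prod D.subtype A) with hGdef
  have hGclosed : IsClosed (G : Set (X × X)) := graph_closed hanal
  haveI : CompleteSpace ↥G := hGclosed.completeSpace_coe
  -- P as a continuous linear map on the graph
  have hPGbound : ∀ g : ↥G, ‖(P.comp ((LinearMap.fst ℂ X X).comp G.subtype)) g‖
      ≤ (2 * c₁) * ‖g‖ := by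
    intro g
    obtain ⟨d, hd⟩ := g.2
    have hd1 : (d : X) = (g : X × X).1 := by rw [← hd]; rfl
    have hd2 : A d = (g : X × X).2 := by rw [← hd]; rfl
    have h1 : ‖(d : X)‖ ≤ ‖g‖ := by rw [hd1]; exact norm_fst_le (g : X × X)
    have h2 : ‖A d‖ ≤ ‖g‖ := by rw [hd2]; exact norm_snd_le (g : X × X)
    have h3 : (P.comp ((LinearMap.fst ℂ X X).comp G.subtype)) g = P (d : X) := by
      show P ((g : X × X).1) = P (d : X)
      rw [hd1]
    rw [h3]
    calc ‖P (d : X)‖ ≤ c₁ * (‖(d : X)‖ + ‖A d‖) := hc₁ d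
      _ ≤ c₁ * (‖g‖ + ‖g‖) := by
          apply mul_le_mul_of_nonneg_left (add_le_add h1 h2) hc₁0
      _ = (2 * c₁) * ‖g‖ := by ring
  set PG : ↥G →L[ℂ] X :=
    LinearMap.mkContinuous (P.comp ((LinearMap.fst ℂ X X).comp G.subtype)) (2 * c₁) hPGbound
    with hPGdef
  have hPGapp : ∀ g : ↥G, PG g = P ((g : X × X).1) := fun g => rfl
  set fstG : ↥G →L[ℂ] X := (ContinuousLinearMap.fst ℂ X X).comp G.subtypeL with hfstGdef
  set sndG : ↥G →L[ℂ] X := (ContinuousLinearMap.snd ℂ X X).comp G.subtypeL with hsndGdef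
  -- conjugate exponent
  set q : ℝ := p.conjExponent with hqdef
  have hpq : p.HolderConjugate q := Real.HolderConjugate.conjExponent hp
  have hq0 : 0 < q := hpq.symm.pos
  have hp0 : 0 < p := hpq.pos
  have main : ∀ l : ℝ, 0 < l → ∀ x : ↥D,
      ‖P (x : X)‖ ≤ (κ * (l*q) ^ (-(1/q)) + Real.exp (-(l*α)) * (c₁*M₁)) * ‖A x‖
        + (l * (κ * (l*q) ^ (-(1/q))) + Real.exp (-(l*α)) * (c₁*M₁)) * ‖(x : X)‖ := by
    intro l hl
    set Cl : ℝ := κ * (l*q) ^ (-(1/q)) with hCldef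
    set vv : X → X := fun y => ∫ t in (0:ℝ)..α, Real.exp (-(l*t)) • T t y with hvvdef
    have hecont : Continuous (fun t : ℝ => Real.exp (-(l*t))) := by continuity
    have heIoc : ∀ t ∈ Ioc (0:ℝ) α, Real.exp (-(l*t)) ≤ 1 := by
      intro t ht
      rw [Real.exp_le_one_iff]
      have : 0 ≤ l * t := mul_nonneg hl.le ht.1.le
      linarith
    have hvint : ∀ y : X, IntervalIntegrable (fun t => Real.exp (-(l*t)) • T t y)
        MeasureTheory.volume 0 α := by
      intro y
      apply ContinuousOn.intervalIntegrable
      rw [uIcc_of_le hα.le]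
      exact hecont.continuousOn.smul ((hT.2.2 y).mono Icc_subset_Ici_self)
    have hvnorm : ∀ y : X, ‖vv y‖ ≤ M₁ * α * ‖y‖ := by
      intro y
      have h1 : ∀ t ∈ Set.uIoc (0:ℝ) α, ‖Real.exp (-(l*t)) • T t y‖ ≤ M₁ * ‖y‖ := by
        intro t ht
        rw [uIoc_of_le hα.le] at ht
        rw [norm_smul, Real.norm_eq_abs, abs_of_pos (Real.exp_pos _)]
        calc Real.exp (-(l*t)) * ‖T t y‖ ≤ 1 * ‖T t y‖ :=
              mul_le_mul_of_nonneg_right (heIoc t ht) (norm_nonneg _)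
          _ = ‖T t y‖ := one_mul _
          _ ≤ ‖T t‖ * ‖y‖ := (T t).le_opNorm y
          _ ≤ M₁ * ‖y‖ := mul_le_mul_of_nonneg_right
              (hM₁ t ⟨ht.1.le, ht.2⟩) (norm_nonneg _)
      have := intervalIntegral.norm_integral_le_of_norm_le_const h1
      rw [sub_zero, abs_of_pos hα] at this
      calc ‖vv y‖ ≤ M₁ * ‖y‖ * α := this
        _ = M₁ * α * ‖y‖ := by ring
    have hvsub : ∀ y y' : X, vv (y - y') = vv y - vv y' := by
      intro y y'
      rw [hvvdef]
      rw [← intervalIntegral.integral_sub (hvint y) (hvint y')]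
      apply intervalIntegral.integral_congr
      intro t _
      simp only [map_sub, smul_sub]
    have hvsmul : ∀ (r : ℝ) (y : X), vv (r • y) = r • vv y := by
      intro r y
      rw [hvvdef]
      rw [← intervalIntegral.integral_smul]
      apply intervalIntegral.integral_congr
      intro t _
      simp only [(T t).map_smul_of_tower]
      rw [smul_comm]
    -- the graph-valued integrand
    have hFmem : ∀ (z : ↥D) (t : ℝ),
        ((T (max t 0) (z : X), T (max t 0) (A z)) : X × X) ∈ G := by
      intro z t
      refine ⟨⟨T (max t 0) (z : X), Tmem hT hgen z (le_max_right _ _)⟩, ?_⟩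
      show ((T (max t 0) (z : X) : X), A ⟨T (max t 0) (z : X), _⟩)
        = (T (max t 0) (z : X), T (max t 0) (A z))
      rw [TmemA hT hgen z (le_max_right _ _)]
    set F : ↥D → ℝ → ↥G := fun z t =>
      ⟨(T (max t 0) (z : X), T (max t 0) (A z)), hFmem z t⟩ with hFdef
    have hFcont : ∀ z, Continuous (F z) := by
      intro z
      apply Continuous.subtype_mk
      refine Continuous.prodMk ?_ ?_ <;>
        exact (hT.2.2 _).comp_continuous (continuous_id.max continuous_const)
          (fun t => le_max_right t 0)
    have hFint : ∀ z : ↥D, IntervalIntegrable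
        (fun t => ((Real.exp (-(l*t)) : ℝ) : ℂ) • F z t) MeasureTheory.volume 0 α := by
      intro z
      apply Continuous.intervalIntegrable
      exact ((Complex.continuous_ofReal.comp hecont)).smul (hFcont z)
    set IG : ↥D → ↥G := fun z =>
      ∫ t in (0:ℝ)..α, ((Real.exp (-(l*t)) : ℝ) : ℂ) • F z t with hIGdef
    have hfst : ∀ z : ↥D, ((IG z : X × X)).1 = vv (z : X) := by
      intro z
      have h1 : ((IG z : X × X)).1 = fstG (IG z) := rfl
      rw [h1, hIGdef]
      rw [← fstG.intervalIntegral_comp_comm (hFint z)]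
      apply intervalIntegral.integral_congr
      intro t ht
      rw [uIcc_of_le hα.le] at ht
      show fstG (((Real.exp (-(l*t)) : ℝ) : ℂ) • F z t) = Real.exp (-(l*t)) • T t (z : X)
      rw [_root_.map_smul]
      have h2 : fstG (F z t) = T (max t 0) (z : X) := rfl
      rw [h2, Complex.coe_smul, max_eq_left ht.1]
    have hsnd : ∀ z : ↥D, ((IG z : X × X)).2 = vv ((A z)) := by
      intro z
      have h1 : ((IG z : X × X)).2 = sndG (IG z) := rfl
      rw [h1, hIGdef]
      rw [← sndG.intervalIntegral_comp_comm (hFint z)]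
      apply intervalIntegral.integral_congr
      intro t ht
      rw [uIcc_of_le hα.le] at ht
      show sndG (((Real.exp (-(l*t)) : ℝ) : ℂ) • F z t) = Real.exp (-(l*t)) • T t (A z)
      rw [_root_.map_smul]
      have h2 : sndG (F z t) = T (max t 0) (A z) := rfl
      rw [h2, Complex.coe_smul, max_eq_left ht.1]
    have hvmem : ∀ z : ↥D, vv (z : X) ∈ D := by
      intro z
      obtain ⟨dz, hdz⟩ := (IG z).2
      have h1 : (dz : X) = vv (z : X) := by
        have := congrArg Prod.fst hdz
        rw [hfst z] at this
        exact this
      rw [← h1]; exact dz.2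
    have hvA : ∀ (z : ↥D) (h : vv (z : X) ∈ D), A ⟨vv (z : X), h⟩ = vv (A z) := by
      intro z h
      obtain ⟨dz, hdz⟩ := (IG z).2
      have h1 : (dz : X) = vv (z : X) := by
        have := congrArg Prod.fst hdz; rw [hfst z] at this; exact this
      have h2 : A dz = vv (A z) := by
        have := congrArg Prod.snd hdz; rw [hsnd z] at this; exact this
      rw [← h2]
      congr 1
      exact Subtype.ext h1.symm
    have hPvv : ∀ z : ↥D, P (vv (z : X)) = ∫ t in (0:ℝ)..α, Real.exp (-(l*t)) • P (T t (z : X)) := by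
      intro z
      have h1 : P (vv (z : X)) = PG (IG z) := by
        rw [hPGapp, hfst z]
      rw [h1, hIGdef]
      rw [← PG.intervalIntegral_comp_comm (hFint z)]
      apply intervalIntegral.integral_congr
      intro t ht
      rw [uIcc_of_le hα.le] at ht
      show PG (((Real.exp (-(l*t)) : ℝ) : ℂ) • F z t) = Real.exp (-(l*t)) • P (T t (z : X))
      rw [_root_.map_smul]
      have h2 : PG (F z t) = P (T (max t 0) (z : X)) := rfl
      rw [h2, Complex.coe_smul, max_eq_left ht.1]
    -- Hölder estimate
    haveI hfinm : IsFiniteMeasure (MeasureTheory.volume.restrict (Ioc (0:ℝ) α)) := by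
      constructor
      rw [Measure.restrict_apply_univ, Real.volume_Ioc]
      exact ENNReal.ofReal_lt_top
    have hgz_cont : ∀ z : ↥D, ContinuousOn (fun t => ‖P (T t (z : X))‖) (Ioc 0 α) := by
      intro z
      have h1 : Continuous fun t => ‖PG (F z t)‖ := (PG.continuous.comp (hFcont z)).norm
      refine h1.continuousOn.congr ?_
      intro t ht
      show ‖P (T t (z : X))‖ = ‖PG (F z t)‖
      rw [hPGapp]
      have h2 : ((F z t : X × X)).1 = T (max t 0) (z : X) := rfl
      rw [h2, max_eq_left ht.1.le]
    have hemem : MemLp (fun t => Real.exp (-(l*t))) (ENNReal.ofReal q)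
        (MeasureTheory.volume.restrict (Ioc (0:ℝ) α)) := by
      apply MemLp.of_bound hecont.aestronglyMeasurable 1
      rw [ae_restrict_iff' measurableSet_Ioc]
      apply Filter.Eventually.of_forall
      intro t ht
      rw [Real.norm_eq_abs, abs_of_pos (Real.exp_pos _)]
      exact heIoc t ht
    have hgmem : ∀ z : ↥D, MemLp (fun t => ‖P (T t (z : X))‖) (ENNReal.ofReal p)
        (MeasureTheory.volume.restrict (Ioc (0:ℝ) α)) := by
      intro z
      apply MemLp.of_bound ((hgz_cont z).aestronglyMeasurable measurableSet_Ioc)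
        (c₁ * M₁ * (‖(z : X)‖ + ‖A z‖))
      rw [ae_restrict_iff' measurableSet_Ioc]
      apply Filter.Eventually.of_forall
      intro t ht
      rw [Real.norm_eq_abs, abs_of_nonneg (norm_nonneg _)]
      have hmem := Tmem hT hgen z ht.1.le
      have h1 := hc₁ ⟨T t (z : X), hmem⟩
      rw [TmemA hT hgen z ht.1.le hmem] at h1
      have hTt := hM₁ t ⟨ht.1.le, ht.2⟩
      calc ‖P (T t (z : X))‖ ≤ c₁ * (‖T t (z : X)‖ + ‖T t (A z)‖) := h1
        _ ≤ c₁ * (M₁ * ‖(z : X)‖ + M₁ * ‖A z‖) := by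
            apply mul_le_mul_of_nonneg_left _ hc₁0
            apply add_le_add
            · exact ((T t).le_opNorm _).trans
                (mul_le_mul_of_nonneg_right hTt (norm_nonneg _))
            · exact ((T t).le_opNorm _).trans
                (mul_le_mul_of_nonneg_right hTt (norm_nonneg _))
        _ = c₁ * M₁ * (‖(z : X)‖ + ‖A z‖) := by ring
    have hlq : (0:ℝ) < l * q := by positivity
    have hIexp : ∫ t in Ioc (0:ℝ) α, Real.exp (-(l*t)) ^ q ≤ (l*q)⁻¹ := by
      have h0 : ∀ t : ℝ, Real.exp (-(l*t)) ^ q = Real.exp ((-(l*q))*t) := by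
        intro t
        rw [← Real.exp_mul]
        ring_nf
      have h1 : ∫ t in Ioc (0:ℝ) α, Real.exp (-(l*t)) ^ q
          = ∫ t in (0:ℝ)..α, Real.exp ((-(l*q))*t) := by
        rw [intervalIntegral.integral_of_le hα.le]
        apply setIntegral_congr_fun measurableSet_Ioc
        intro t _
        exact h0 t
      have h2 : ∫ t in (0:ℝ)..α, Real.exp ((-(l*q))*t)
          = (1 - Real.exp (-(l*q)*α)) / (l*q) := by
        rw [intervalIntegral.integral_comp_mul_left Real.exp (by nlinarith : -(l*q) ≠ 0)]
        rw [integral_exp, mul_zero, Real.exp_zero, smul_eq_mul]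
        field_simp
        ring
      rw [h1, h2]
      rw [div_le_iff₀ hlq, inv_mul_cancel₀ (ne_of_gt hlq)]
      have := Real.exp_pos (-(l*q)*α)
      linarith
    have hkey : ∀ z : ↥D, ‖P (vv (z : X))‖ ≤ Cl * ‖(z : X)‖ := by
      intro z
      rw [hPvv z]
      have h1 : ‖∫ t in (0:ℝ)..α, Real.exp (-(l*t)) • P (T t (z : X))‖
          ≤ ∫ t in Ioc (0:ℝ) α, ‖Real.exp (-(l*t)) • P (T t (z : X))‖ := by
        have := intervalIntegral.norm_integral_le_integral_norm_uIoc
          (f := fun t => Real.exp (-(l*t)) • P (T t (z : X))) (a := (0:ℝ)) (b := α)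
          (μ := MeasureTheory.volume)
        rwa [uIoc_of_le hα.le] at this
      have h2 : ∫ t in Ioc (0:ℝ) α, ‖Real.exp (-(l*t)) • P (T t (z : X))‖
          = ∫ t in Ioc (0:ℝ) α, Real.exp (-(l*t)) * ‖P (T t (z : X))‖ := by
        apply setIntegral_congr_fun measurableSet_Ioc
        intro t _
        show ‖Real.exp (-(l*t)) • P (T t (z : X))‖ = Real.exp (-(l*t)) * ‖P (T t (z : X))‖
        rw [norm_smul, Real.norm_eq_abs, abs_of_pos (Real.exp_pos _)]
      have h3 := integral_mul_le_Lp_mul_Lq_of_nonneg hpq.symm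
        (Filter.Eventually.of_forall (fun t => (Real.exp_pos (-(l*t))).le))
        (Filter.Eventually.of_forall (fun t => norm_nonneg _))
        hemem (hgmem z)
      have h4 : (∫ t in Ioc (0:ℝ) α, Real.exp (-(l*t)) ^ q) ^ (1/q) ≤ (l*q) ^ (-(1/q)) := by
        rw [Real.rpow_neg hlq.le, ← Real.inv_rpow hlq.le]
        apply Real.rpow_le_rpow ?_ hIexp (by positivity)
        apply integral_nonneg
        intro t
        positivity
      have h5 : (∫ t in Ioc (0:ℝ) α, ‖P (T t (z : X))‖ ^ p) ^ (1/p) ≤ κ * ‖(z : X)‖ := by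
        have hh := hadm' (z : X) z.2
        have h6 : (κ:ℝ)^p * ‖(z : X)‖^p = (κ * ‖(z : X)‖)^p :=
          (Real.mul_rpow hκ.le (norm_nonneg _)).symm
        calc (∫ t in Ioc (0:ℝ) α, ‖P (T t (z : X))‖ ^ p) ^ (1/p)
            ≤ ((κ * ‖(z : X)‖)^p)^(1/p) := by
              apply Real.rpow_le_rpow ?_ (h6 ▸ hh) (by positivity)
              apply integral_nonneg
              intro t
              positivity
          _ = κ * ‖(z : X)‖ := by
              rw [one_div, Real.rpow_rpow_inv (by positivity) (ne_of_gt hp0)]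
      calc ‖∫ t in (0:ℝ)..α, Real.exp (-(l*t)) • P (T t (z : X))‖
          ≤ ∫ t in Ioc (0:ℝ) α, Real.exp (-(l*t)) * ‖P (T t (z : X))‖ := h2 ▸ h1
        _ ≤ (∫ t in Ioc (0:ℝ) α, Real.exp (-(l*t)) ^ q) ^ (1/q)
            * (∫ t in Ioc (0:ℝ) α, ‖P (T t (z : X))‖ ^ p) ^ (1/p) := h3
        _ ≤ (l*q) ^ (-(1/q)) * (κ * ‖(z : X)‖) := by
            apply mul_le_mul h4 h5 ?_ ?_
            · apply Real.rpow_nonneg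
              apply integral_nonneg
              intro t
              positivity
            · positivity
        _ = Cl * ‖(z : X)‖ := by rw [hCldef]; ring
    -- the fundamental identity and the A-value of vv on D
    have hftc : ∀ z : ↥D, vv (l • (z : X) - A z)
        = (z : X) - Real.exp (-(l*α)) • T α (z : X) := fun z => ftc_ident hT hgen z hα.le
    have hvAform : ∀ (z : ↥D) (h : vv (z : X) ∈ D),
        A ⟨vv (z : X), h⟩ = l • vv (z : X) - (z : X) + Real.exp (-(l*α)) • T α (z : X) := by
      intro z h
      rw [hvA z h]
      have h2 : vv ((l : ℝ) • (z : X) - A z) = l • vv (z : X) - vv (A z) := by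
        rw [hvsub, hvsmul]
      have h3 : l • vv (z : X) - vv (A z) = (z : X) - Real.exp (-(l*α)) • T α (z : X) := by
        rw [← h2]; exact hftc z
      have h4 : vv (A z) = l • vv (z : X) - ((z : X) - Real.exp (-(l*α)) • T α (z : X)) := by
        rw [← h3]; abel
      rw [h4]; abel
    -- now fix x and approximate A x from within D
    intro x
    set s : ℕ → ℝ := fun n => 1/(n+1) with hsdef
    have hspos : ∀ n, 0 < s n := by
      intro n
      rw [hsdef]
      positivity
    have hzmem : ∀ n, T (s n) (x : X) ∈ D := fun n => Tmem hT hgen x (hspos n).le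
    set z : ℕ → ↥D := fun n => (((s n : ℝ) : ℂ))⁻¹ • (⟨T (s n) (x : X), hzmem n⟩ - x) with hzdef
    have hzcoe : ∀ n, ((z n : X)) = ((s n : ℝ) : ℂ)⁻¹ • (T (s n) (x : X) - (x : X)) := by
      intro n
      rw [hzdef]
      simp
    have hstend : Tendsto s atTop (nhdsWithin 0 (Ioi 0)) := by
      refine tendsto_nhdsWithin_of_tendsto_nhds_of_eventually_within _ ?_ ?_
      · exact tendsto_one_div_add_atTop_nhds_zero_nat
      · exact Filter.Eventually.of_forall (fun n => hspos n)
    have hz : Tendsto (fun n => (z n : X)) atTop (nhds (A x)) := by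
      have h1 := (hgen.2 x).comp hstend
      refine h1.congr ?_
      intro n
      exact (hzcoe n).symm
    have hvz : Tendsto (fun n => vv (z n : X)) atTop (nhds (vv (A x))) := by
      rw [tendsto_iff_norm_sub_tendsto_zero]
      have hz' : Tendsto (fun n => ‖(z n : X) - A x‖) atTop (nhds 0) := by
        rw [← tendsto_iff_norm_sub_tendsto_zero]; exact hz
      apply squeeze_zero (fun n => norm_nonneg _) (g := fun n => M₁ * α * ‖(z n : X) - A x‖)
      · intro n
        rw [← hvsub]
        exact hvnorm _
      · simpa using hz'.const_mul (M₁ * α)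
    set LL : X := l • vv (A x) - A x + Real.exp (-(l*α)) • T α (A x) with hLLdef
    have hAvz : Tendsto (fun n => l • vv (z n : X) - (z n : X)
        + Real.exp (-(l*α)) • T α (z n : X)) atTop (nhds LL) := by
      rw [hLLdef]
      exact ((hvz.const_smul l).sub hz).add
        ((((T α).continuous.tendsto _).comp hz).const_smul _)
    have hmemn : ∀ n, ((vv (z n : X), l • vv (z n : X) - (z n : X)
        + Real.exp (-(l*α)) • T α (z n : X)) : X × X) ∈ G := by
      intro n
      refine ⟨⟨vv (z n : X), hvmem (z n)⟩, ?_⟩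
      show ((vv (z n : X) : X), A ⟨vv (z n : X), hvmem (z n)⟩) = _
      rw [hvAform (z n) (hvmem (z n))]
    have hpair : Tendsto (fun n => ((vv (z n : X), l • vv (z n : X) - (z n : X)
        + Real.exp (-(l*α)) • T α (z n : X)) : X × X)) atTop (nhds ((vv (A x), LL) : X × X)) :=
      hvz.prodMk_nhds hAvz
    have hlimmem : ((vv (A x), LL) : X × X) ∈ G :=
      hGclosed.mem_of_tendsto hpair (Filter.Eventually.of_forall hmemn)
    obtain ⟨dA, hdA⟩ := hlimmem
    have hdA1 : (dA : X) = vv (A x) := congrArg Prod.fst hdA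
    have hdA2 : A dA = LL := congrArg Prod.snd hdA
    have hmemAx : vv (A x) ∈ D := hdA1 ▸ dA.2
    have hAAx : A ⟨vv (A x), hmemAx⟩ = LL := by
      rw [← hdA2]
      congr 1
      exact Subtype.ext hdA1.symm
    have hPz : Tendsto (fun n => P (vv (z n : X))) atTop (nhds (P (vv (A x)))) := by
      rw [tendsto_iff_norm_sub_tendsto_zero]
      have hb : ∀ n, ‖P (vv (z n : X)) - P (vv (A x))‖
          ≤ c₁ * (‖vv (z n : X) - vv (A x)‖ + ‖(l • vv (z n : X) - (z n : X)
            + Real.exp (-(l*α)) • T α (z n : X)) - LL‖) := by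
        intro n
        set dd : ↥D := ⟨vv (z n : X), hvmem (z n)⟩ - ⟨vv (A x), hmemAx⟩ with hdddef
        have hdd1 : (dd : X) = vv (z n : X) - vv (A x) := rfl
        have hdd2 : A dd = (l • vv (z n : X) - (z n : X)
            + Real.exp (-(l*α)) • T α (z n : X)) - LL := by
          rw [hdddef, map_sub, hvAform (z n) (hvmem (z n)), hAAx]
        have hcc := hc₁ dd
        rw [hdd1, hdd2] at hcc
        have hPdd : P (vv (z n : X)) - P (vv (A x)) = P ((dd : X)) := by
          rw [hdd1, map_sub]
        rw [hPdd]
        exact hcc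
      apply squeeze_zero (fun n => norm_nonneg _) hb
      have t1 : Tendsto (fun n => ‖vv (z n : X) - vv (A x)‖) atTop (nhds 0) := by
        rw [← tendsto_iff_norm_sub_tendsto_zero]; exact hvz
      have t2 : Tendsto (fun n => ‖(l • vv (z n : X) - (z n : X)
          + Real.exp (-(l*α)) • T α (z n : X)) - LL‖) atTop (nhds 0) := by
        rw [← tendsto_iff_norm_sub_tendsto_zero]; exact hAvz
      simpa using (t1.add t2).const_mul c₁
    have hPAx : ‖P (vv (A x))‖ ≤ Cl * ‖A x‖ := by
      apply le_of_tendsto_of_tendsto' hPz.norm ((hz.norm).const_mul Cl)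
      intro n
      exact hkey (z n)
    -- assemble
    have hident : (x : X) = vv (l • (x : X) - A x) + Real.exp (-(l*α)) • T α (x : X) := by
      rw [hftc x]; abel
    have hPsplit : P (x : X) = l • P (vv (x : X)) - P (vv (A x))
        + Real.exp (-(l*α)) • P (T α (x : X)) := by
      conv_lhs => rw [hident]
      rw [map_add, P.map_smul_of_tower]
      congr 1
      rw [hvsub, hvsmul, map_sub, P.map_smul_of_tower]
    have hPTα : ‖P (T α (x : X))‖ ≤ c₁ * M₁ * (‖(x : X)‖ + ‖A x‖) := by
      have hmem := Tmem hT hgen x hα.le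
      have h1 := hc₁ ⟨T α (x : X), hmem⟩
      rw [TmemA hT hgen x hα.le hmem] at h1
      have hTα := hM₁ α ⟨hα.le, le_rfl⟩
      calc ‖P (T α (x : X))‖ ≤ c₁ * (‖T α (x : X)‖ + ‖T α (A x)‖) := h1
        _ ≤ c₁ * (M₁ * ‖(x : X)‖ + M₁ * ‖A x‖) := by
            apply mul_le_mul_of_nonneg_left _ hc₁0
            apply add_le_add
            · exact ((T α).le_opNorm _).trans
                (mul_le_mul_of_nonneg_right hTα (norm_nonneg _))
            · exact ((T α).le_opNorm _).trans
                (mul_le_mul_of_nonneg_right hTα (norm_nonneg _))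
        _ = c₁ * M₁ * (‖(x : X)‖ + ‖A x‖) := by ring
    have hE0 : 0 ≤ Real.exp (-(l*α)) := (Real.exp_pos _).le
    have hCl0 : 0 ≤ Cl := by rw [hCldef]; positivity
    calc ‖P (x : X)‖ = ‖l • P (vv (x : X)) - P (vv (A x))
          + Real.exp (-(l*α)) • P (T α (x : X))‖ := by rw [hPsplit]
      _ ≤ ‖l • P (vv (x : X))‖ + ‖P (vv (A x))‖
          + ‖Real.exp (-(l*α)) • P (T α (x : X))‖ := by
          apply (norm_add_le _ _).trans
          apply add_le_add_left (norm_sub_le _ _)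
      _ ≤ (l * (Cl * ‖(x : X)‖) + Cl * ‖A x‖)
          + Real.exp (-(l*α)) * (c₁ * M₁ * (‖(x : X)‖ + ‖A x‖)) := by
          apply add_le_add (add_le_add ?_ hPAx) ?_
          · rw [norm_smul, Real.norm_eq_abs, abs_of_pos hl]
            exact mul_le_mul_of_nonneg_left (hkey x) hl.le
          · rw [norm_smul, Real.norm_eq_abs, abs_of_pos (Real.exp_pos _)]
            exact mul_le_mul_of_nonneg_left hPTα hE0
      _ = (Cl + Real.exp (-(l*α)) * (c₁*M₁)) * ‖A x‖
          + (l * Cl + Real.exp (-(l*α)) * (c₁*M₁)) * ‖(x : X)‖ := by ring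
  -- choose l large enough
  have htend : Tendsto (fun l : ℝ => κ * (l*q) ^ (-(1/q)) + Real.exp (-(l*α)) * (c₁*M₁))
      atTop (nhds 0) := by
    have h1 : Tendsto (fun l : ℝ => (l*q) ^ (-(1/q))) atTop (nhds 0) := by
      apply (tendsto_rpow_neg_atTop (by positivity)).comp
      exact Tendsto.atTop_mul_const hq0 tendsto_id
    have h2 : Tendsto (fun l : ℝ => Real.exp (-(l*α))) atTop (nhds 0) := by
      apply Real.tendsto_exp_atBot.comp
      have : Tendsto (fun l : ℝ => l * α) atTop atTop :=
        Tendsto.atTop_mul_const hα tendsto_id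
      exact tendsto_neg_atTop_atBot.comp this
    have := (h1.const_mul κ).add (h2.mul_const (c₁*M₁))
    simpa using this
  obtain ⟨l, hlδ, hl0⟩ : ∃ l : ℝ,
      (κ * (l*q) ^ (-(1/q)) + Real.exp (-(l*α)) * (c₁*M₁)) < δ ∧ 0 < l := by
    have := (htend.eventually_lt_const hδ).and (eventually_gt_atTop (0:ℝ))
    exact this.exists
  refine ⟨l * (κ * (l*q) ^ (-(1/q))) + Real.exp (-(l*α)) * (c₁*M₁) + 1, by positivity, ?_⟩
  intro x
  have h := main l hl0 x
  have h1 : (κ * (l*q) ^ (-(1/q)) + Real.exp (-(l*α)) * (c₁*M₁)) * ‖A x‖ ≤ δ * ‖A x‖ :=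
    mul_le_mul_of_nonneg_right hlδ.le (norm_nonneg _)
  have h2 : (l * (κ * (l*q) ^ (-(1/q))) + Real.exp (-(l*α)) * (c₁*M₁)) * ‖(x : X)‖
      ≤ (l * (κ * (l*q) ^ (-(1/q))) + Real.exp (-(l*α)) * (c₁*M₁) + 1) * ‖(x : X)‖ := by
    apply mul_le_mul_of_nonneg_right _ (norm_nonneg _)
    linarith
  linarith
end
end

section
/- Let $A$ generate a $C_0$-semigroup on a Banach space $X$, assume $0 \in \rho(A)$, and let $B \in \mathcal{L}(U, X_{-1})$. For $u \in W^{2,p}_{loc}([0,\infty),U)$ with $u(0) = 0$, define $\Phi_t u = \int_0^t \mathbb{T}_{-1}(t-s)Bu(s)\,ds$ (integral in $X_{-1}$). Then $\Phi_t u = R(0, A_{-1})B\, u(t) - R(0,A)\,\Phi_t \dot{u}$; in particular, if $B$ is $p$-admissible for $A$, then $\Phi_t u \in Z$ for every Banach space $Z$ with $R(\lambda, A_{-1})B \in \mathcal{L}(U,Z)$ and $D(A) \subset Z \subset X$. -/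
open MeasureTheory Set Filter Topology

noncomputable section

section Helpers

variable {Y : Type*} [NormedAddCommGroup Y] [NormedSpace ℂ Y]

lemma sg_bound [CompleteSpace Y] {T : ℝ → Y →L[ℂ] Y} (hT : IsC0Semigroup T) (b : ℝ) :
    ∃ M : ℝ, 0 ≤ M ∧ ∀ s ∈ Icc (0:ℝ) b, ∀ y : Y, ‖T s y‖ ≤ M * ‖y‖ := by
  have h : ∀ y : Y, ∃ C, ∀ i : Icc (0:ℝ) b, ‖T i y‖ ≤ C := by
    intro y
    obtain ⟨C, hC⟩ := (isCompact_Icc (a := (0:ℝ)) (b := b)).exists_bound_of_continuousOn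
      ((hT.2.2 y).mono Icc_subset_Ici_self)
    exact ⟨C, fun i => hC i i.2⟩
  obtain ⟨C, hC⟩ := banach_steinhaus (g := fun i : Icc (0:ℝ) b => T i) h
  refine ⟨max C 0, le_max_right _ _, fun s hs y => ?_⟩
  calc ‖T s y‖ ≤ ‖T s‖ * ‖y‖ := (T s).le_opNorm y
    _ ≤ max C 0 * ‖y‖ := by
        gcongr
        exact le_max_of_le_left (hC ⟨s, hs⟩)

lemma sg_tendsto [CompleteSpace Y] {T : ℝ → Y →L[ℂ] Y} (hT : IsC0Semigroup T)
    {l : Filter ℝ} {r : ℝ → ℝ} {r₀ : ℝ} {g : ℝ → Y} {L : Y}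
    (hr₀ : 0 ≤ r₀) (hr : Tendsto r l (𝓝 r₀)) (hrn : ∀ᶠ y in l, 0 ≤ r y)
    (hg : Tendsto g l (𝓝 L)) :
    Tendsto (fun y => T (r y) (g y)) l (𝓝 (T r₀ L)) := by
  obtain ⟨M, hM0, hM⟩ := sg_bound hT (r₀ + 1)
  have h1 : Tendsto (fun y => T (r y) (g y - L)) l (𝓝 0) := by
    rw [tendsto_zero_iff_norm_tendsto_zero]
    have hub : ∀ᶠ y in l, r y ≤ r₀ + 1 := hr.eventually (eventually_le_nhds (lt_add_one r₀))
    have hev : ∀ᶠ y in l, ‖T (r y) (g y - L)‖ ≤ M * ‖g y - L‖ := by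
      filter_upwards [hub, hrn] with y h1 h2 using hM (r y) ⟨h2, h1⟩ _
    have hgL : Tendsto (fun y => M * ‖g y - L‖) l (𝓝 0) := by
      have : Tendsto (fun y => g y - L) l (𝓝 0) := by
        simpa using hg.sub (tendsto_const_nhds (x := L))
      simpa using (this.norm.const_mul M)
    exact squeeze_zero' (Eventually.of_forall fun y => norm_nonneg _) hev hgL
  have h2 : Tendsto (fun y => T (r y) L) l (𝓝 (T r₀ L)) := by
    have hc : Tendsto (fun s => T s L) (𝓝[Ici 0] r₀) (𝓝 (T r₀ L)) := (hT.2.2 L) r₀ hr₀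
    exact hc.comp (tendsto_nhdsWithin_iff.mpr ⟨hr, hrn⟩)
  have h3 := h1.add h2
  rw [zero_add] at h3
  refine h3.congr fun y => ?_
  simp [map_sub]

lemma sg_contOn [CompleteSpace Y] {T : ℝ → Y →L[ℂ] Y} (hT : IsC0Semigroup T)
    {g : ℝ → Y} (hg : Continuous g) (t : ℝ) :
    ContinuousOn (fun s => T (t - s) (g s)) (Icc 0 t) := by
  intro s₀ hs₀
  have : Tendsto (fun s => T (t - s) (g s)) (𝓝[Icc 0 t] s₀) (𝓝 (T (t - s₀) (g s₀))) := by
    apply sg_tendsto hT (by linarith [hs₀.2])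
    · exact ((continuous_const.sub continuous_id).tendsto s₀).mono_left nhdsWithin_le_nhds
    · filter_upwards [self_mem_nhdsWithin] with s hs
      linarith [hs.2]
    · exact (hg.tendsto s₀).mono_left nhdsWithin_le_nhds
  exact this

lemma sg_domain {T : ℝ → Y →L[ℂ] Y} (hT : IsC0Semigroup T)
    {D : Submodule ℂ Y} {A : ↥D →ₗ[ℂ] Y} (hgen : IsGenerator T D A)
    {t : ℝ} (ht : 0 ≤ t) (x : ↥D) :
    ∃ h : T t (x:Y) ∈ D, A ⟨T t (x:Y), h⟩ = T t (A x) := by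
  have key : Tendsto (fun h : ℝ => (h:ℂ)⁻¹ • (T h (T t (x:Y)) - T t (x:Y)))
      (𝓝[Ioi 0] 0) (𝓝 (T t (A x))) := by
    have h1 : Tendsto (fun h : ℝ => T t ((h:ℂ)⁻¹ • (T h (x:Y) - (x:Y))))
        (𝓝[Ioi 0] 0) (𝓝 (T t (A x))) := ((T t).continuous.tendsto _).comp (hgen.2 x)
    refine h1.congr' ?_
    filter_upwards [self_mem_nhdsWithin] with h hh
    have h0 : (0:ℝ) ≤ h := le_of_lt hh
    have hcomm : T h (T t (x:Y)) = T t (T h (x:Y)) := by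
      have e1 := hT.2.1 h t h0 ht
      have e2 := hT.2.1 t h ht h0
      rw [add_comm] at e1
      rw [e2] at e1
      calc T h (T t (x:Y)) = ((T h).comp (T t)) (x:Y) := rfl
        _ = ((T t).comp (T h)) (x:Y) := by rw [← e1]
        _ = T t (T h (x:Y)) := rfl
    rw [_root_.map_smul, map_sub, hcomm]
  have hmem : T t (x:Y) ∈ D := (hgen.1 _).mpr ⟨_, key⟩
  refine ⟨hmem, tendsto_nhds_unique (hgen.2 ⟨_, hmem⟩) key⟩

lemma sg_res_comm {T : ℝ → Y →L[ℂ] Y} (hT : IsC0Semigroup T)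
    {D : Submodule ℂ Y} {A : ↥D →ₗ[ℂ] Y} (hgen : IsGenerator T D A)
    {R : Y →L[ℂ] Y} (hres : IsResolvent D A 0 R) {t : ℝ} (ht : 0 ≤ t) (y : Y) :
    R (T t y) = T t (R y) := by
  obtain ⟨hm, heq⟩ := hres.1 y
  rw [zero_smul, zero_sub] at heq
  have hA : A ⟨R y, hm⟩ = -y := neg_eq_iff_eq_neg.mp heq
  obtain ⟨hm2, heq2⟩ := sg_domain hT hgen ht ⟨R y, hm⟩
  have h3 := hres.2 ⟨T t (R y), hm2⟩
  rw [zero_smul, zero_sub] at h3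
  have : A (⟨T t (R y), hm2⟩ : ↥D) = -(T t y) := by
    rw [show (⟨T t (R y), hm2⟩ : ↥D) = ⟨T t ((⟨R y, hm⟩ : ↥D) : Y), hm2⟩ from rfl, heq2, hA,
      map_neg]
  rw [this, neg_neg] at h3
  exact h3

end Helpers

/-- integration by parts for the controlled state:
`Φ_t u = R(0,A₋₁) B u(t) - R(0,A) Φ_t u̇` for `u ∈ W^{2,p}` with `u(0) = 0`,
assuming `0 ∈ ρ(A)`; in particular, if `B` is `p`-admissible then `Φ_t u`
belongs to (the image of) every intermediate space `Z` with
`R(0,A₋₁) B ∈ 𝓛(U,Z)` and `D(A) ⊆ Z ⊆ X`. -/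
theorem statement17
    {X U Xm1 : Type*} [NormedAddCommGroup X] [NormedSpace ℂ X] [CompleteSpace X]
    [NormedAddCommGroup U] [NormedSpace ℂ U] [CompleteSpace U]
    [NormedAddCommGroup Xm1] [NormedSpace ℂ Xm1] [CompleteSpace Xm1]
    (p : ℝ) (hp : 1 ≤ p)
    (T : ℝ → X →L[ℂ] X) (hT : IsC0Semigroup T)
    (Tm : ℝ → Xm1 →L[ℂ] Xm1) (hTm : IsC0Semigroup Tm)
    (ι : X →L[ℂ] Xm1) (hι : Function.Injective ι) (hdense : DenseRange ι)
    (hext : ∀ t ≥ (0:ℝ), ∀ x : X, Tm t (ι x) = ι (T t x))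
    (D : Submodule ℂ X) (A : ↥D →ₗ[ℂ] X) (hgen : IsGenerator T D A)
    (Dm : Submodule ℂ Xm1) (Am : ↥Dm →ₗ[ℂ] Xm1) (hgenm : IsGenerator Tm Dm Am)
    (hDm : ∀ z : Xm1, z ∈ Dm ↔ ∃ x : X, ι x = z)
    (R0 : X →L[ℂ] X) (h0 : IsResolvent D A 0 R0)
    (R0m : Xm1 →L[ℂ] Xm1) (h0m : IsResolvent Dm Am 0 R0m)
    (hcomp : ∀ x : X, R0m (ι x) = ι (R0 x))
    (B : U →L[ℂ] Xm1) :
    ∀ u u' : ℝ → U, (∀ s : ℝ, HasDerivAt u (u' s) s) → Continuous u' → u 0 = 0 →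
      (∀ t ≥ (0:ℝ),
        (∫ s in (0:ℝ)..t, Tm (t - s) (B (u s))) =
          R0m (B (u t)) - R0m (∫ s in (0:ℝ)..t, Tm (t - s) (B (u' s)))) ∧
      ((∀ t ≥ (0:ℝ), ∀ v : ℝ → U, Continuous v →
          ∃ x : X, ι x = ∫ s in (0:ℝ)..t, Tm (t - s) (B (v s))) →
        ∀ Z : Submodule ℂ X, D ≤ Z → (∀ v : U, ∃ z ∈ Z, ι z = R0m (B v)) →
          ∀ t ≥ (0:ℝ), ∃ z ∈ Z, ι z = ∫ s in (0:ℝ)..t, Tm (t - s) (B (u s))) := by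
  intro u u' hu hu'c hu0
  have hucont : Continuous u := by
    rw [continuous_iff_continuousAt]; exact fun s => (hu s).continuousAt
  have hBu : Continuous fun s => B (u s) := B.continuous.comp hucont
  have hBu' : Continuous fun s => B (u' s) := B.continuous.comp hu'c
  have hxc : Continuous fun s => R0m (B (u s)) := R0m.continuous.comp hBu
  have hxc' : Continuous fun s => R0m (B (u' s)) := R0m.continuous.comp hBu'
  have key : ∀ t ≥ (0:ℝ), (∫ s in (0:ℝ)..t, Tm (t - s) (B (u s))) =
      R0m (B (u t)) - R0m (∫ s in (0:ℝ)..t, Tm (t - s) (B (u' s))) := by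
    intro t ht
    rcases eq_or_lt_of_le ht with h0t | h0t
    · rw [← h0t]
      simp [hu0]
    set f : ℝ → Xm1 := fun s => Tm (t - s) (R0m (B (u s))) with hf
    set F : ℝ → Xm1 := fun s => Tm (t - s) (B (u s)) + Tm (t - s) (R0m (B (u' s))) with hF
    have hcont_f : ContinuousOn f (Icc 0 t) := sg_contOn hTm hxc t
    have hcG1 : ContinuousOn (fun s => Tm (t - s) (B (u s))) (Icc 0 t) := sg_contOn hTm hBu t
    have hcG2 : ContinuousOn (fun s => Tm (t - s) (R0m (B (u' s)))) (Icc 0 t) :=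
      sg_contOn hTm hxc' t
    have hcG3 : ContinuousOn (fun s => Tm (t - s) (B (u' s))) (Icc 0 t) := sg_contOn hTm hBu' t
    have hderiv : ∀ s₀ ∈ Ioo (0:ℝ) t, HasDerivWithinAt f (F s₀) (Ioi s₀) s₀ := by
      intro s₀ hs₀
      rw [hasDerivWithinAt_iff_tendsto_slope,
        Set.diff_singleton_eq_self (by simp : s₀ ∉ Ioi s₀)]
      set z := R0m (B (u s₀)) with hz
      have hzmem : z ∈ Dm := (h0m.1 (B (u s₀))).choose
      have hAz : Am ⟨z, hzmem⟩ = -(B (u s₀)) := by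
        have h := (h0m.1 (B (u s₀))).choose_spec
        simp only [zero_smul, zero_sub] at h
        exact neg_eq_iff_eq_neg.mp h
      have hxd : HasDerivAt (fun s => R0m (B (u s))) (R0m (B (u' s₀))) s₀ := by
        have h := (((R0m.comp B).restrictScalars ℝ).hasFDerivAt
          (x := u s₀)).comp_hasDerivAt s₀ (hu s₀)
        exact h
      have hslope : Tendsto (slope (fun s => R0m (B (u s))) s₀) (𝓝[Ioi s₀] s₀)
          (𝓝 (R0m (B (u' s₀)))) :=
        (hasDerivAt_iff_tendsto_slope.mp hxd).mono_left
          (nhdsWithin_mono _ fun y hy => mem_compl_singleton_iff.mpr (ne_of_gt hy))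
      have hsub : Tendsto (fun y => y - s₀) (𝓝[Ioi s₀] s₀) (𝓝[Ioi 0] 0) := by
        apply tendsto_nhdsWithin_iff.mpr
        refine ⟨?_, ?_⟩
        · have hbase : Tendsto (fun y : ℝ => y - s₀) (𝓝 s₀) (𝓝 (s₀ - s₀)) :=
            (continuous_id.sub continuous_const).tendsto s₀
          rw [sub_self] at hbase
          exact hbase.mono_left nhdsWithin_le_nhds
        · filter_upwards [self_mem_nhdsWithin] with y hy
          simpa using hy
      have hq : Tendsto (fun y => (y - s₀)⁻¹ • (Tm (y - s₀) z - z)) (𝓝[Ioi s₀] s₀)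
          (𝓝 (Am ⟨z, hzmem⟩)) := by
        have h := (hgenm.2 ⟨z, hzmem⟩).comp hsub
        refine h.congr fun y => ?_
        simp only [Function.comp]
        rw [show ((y - s₀ : ℝ) : ℂ)⁻¹ = (((y - s₀)⁻¹ : ℝ) : ℂ) from (Complex.ofReal_inv _).symm,
          Complex.coe_smul]
      have hmain : Tendsto (fun y => Tm (t - y) ((slope (fun s => R0m (B (u s))) s₀) y -
            (y - s₀)⁻¹ • (Tm (y - s₀) z - z))) (𝓝[Ioi s₀] s₀)
          (𝓝 (Tm (t - s₀) (R0m (B (u' s₀)) - Am ⟨z, hzmem⟩))) := by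
        apply sg_tendsto hTm (by linarith [hs₀.2])
        · exact ((continuous_const.sub continuous_id).tendsto s₀).mono_left nhdsWithin_le_nhds
        · have hyt : ∀ᶠ y in 𝓝[Ioi s₀] s₀, y < t :=
            (eventually_lt_nhds hs₀.2).filter_mono nhdsWithin_le_nhds
          filter_upwards [hyt] with y hy
          linarith
        · exact hslope.sub hq
      have hlim : Tm (t - s₀) (R0m (B (u' s₀)) - Am ⟨z, hzmem⟩) = F s₀ := by
        rw [hAz, sub_neg_eq_add, map_add, hF]
        simp only [add_comm]
      rw [hlim] at hmain
      refine Tendsto.congr' ?_ hmain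
      have hyt : ∀ᶠ y in 𝓝[Ioi s₀] s₀, y ≤ t :=
        (eventually_le_nhds hs₀.2).filter_mono nhdsWithin_le_nhds
      filter_upwards [hyt, self_mem_nhdsWithin] with y hyt' hy
      have hy' : s₀ < y := hy
      have h1 : (0:ℝ) ≤ t - y := by linarith
      have h2 : (0:ℝ) ≤ y - s₀ := by linarith
      have hsg : Tm (t - s₀) z = Tm (t - y) (Tm (y - s₀) z) := by
        have h := hTm.2.1 (t - y) (y - s₀) h1 h2
        rw [show t - y + (y - s₀) = t - s₀ by ring] at h
        rw [h]
        rfl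
      have hfy : f y = Tm (t - y) (R0m (B (u y))) := rfl
      have hfs : f s₀ = Tm (t - s₀) z := rfl
      have e1 : f y - f s₀ = Tm (t - y) (R0m (B (u y)) - Tm (y - s₀) z) := by
        rw [hfy, hfs, hsg, (Tm (t - y)).map_sub]
      rw [slope_def_module (fun s => R0m (B (u s))), slope_def_module f, e1,
        ← smul_sub, ← (Tm (t - y)).map_smul_of_tower]
      congr 1
      rw [← hz]
      abel
    have hintF : IntervalIntegrable F volume 0 t := by
      apply ContinuousOn.intervalIntegrable
      rw [uIcc_of_le ht]
      exact hcG1.add hcG2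
    have hFTC := intervalIntegral.integral_eq_sub_of_hasDeriv_right_of_le ht hcont_f hderiv hintF
    have hf0 : f 0 = 0 := by simp [hf, hu0]
    have hft : f t = R0m (B (u t)) := by simp [hf, hTm.1]
    rw [hf0, hft, sub_zero] at hFTC
    have hint1 : IntervalIntegrable (fun s => Tm (t - s) (B (u s))) volume 0 t := by
      apply ContinuousOn.intervalIntegrable
      rw [uIcc_of_le ht]
      exact hcG1
    have hint2 : IntervalIntegrable (fun s => Tm (t - s) (R0m (B (u' s)))) volume 0 t := by
      apply ContinuousOn.intervalIntegrable
      rw [uIcc_of_le ht]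
      exact hcG2
    have hint3 : IntervalIntegrable (fun s => Tm (t - s) (B (u' s))) volume 0 t := by
      apply ContinuousOn.intervalIntegrable
      rw [uIcc_of_le ht]
      exact hcG3
    have hsplit : (∫ s in (0:ℝ)..t, F s) =
        (∫ s in (0:ℝ)..t, Tm (t - s) (B (u s))) +
          ∫ s in (0:ℝ)..t, Tm (t - s) (R0m (B (u' s))) :=
      intervalIntegral.integral_add hint1 hint2
    have hswap : (∫ s in (0:ℝ)..t, Tm (t - s) (R0m (B (u' s)))) =
        R0m (∫ s in (0:ℝ)..t, Tm (t - s) (B (u' s))) := by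
      rw [← R0m.intervalIntegral_comp_comm hint3]
      apply intervalIntegral.integral_congr
      intro s hs
      rw [uIcc_of_le ht] at hs
      exact (sg_res_comm hTm hgenm h0m (by linarith [hs.2]) _).symm
    rw [hsplit, hswap] at hFTC
    exact eq_sub_of_add_eq hFTC
  refine ⟨key, ?_⟩
  intro hadm Z hDZ hRB t ht
  obtain ⟨x, hx⟩ := hadm t ht u' hu'c
  obtain ⟨z₁, hz₁Z, hz₁⟩ := hRB (u t)
  have hRx : R0 x ∈ D := (h0.1 x).choose
  refine ⟨z₁ - R0 x, Z.sub_mem hz₁Z (hDZ hRx), ?_⟩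
  rw [map_sub, hz₁, ← hcomp, hx]
  exact (key t ht).symm
end
end

section
/- Let $(A,B,C)$ generate a regular linear system on Banach spaces $X, U, U$ with transfer function $H(\lambda) = C_\Lambda R(\lambda, A_{-1})B$ satisfying $\lim_{s \to +\infty}\|H(s)\| = 0$, and let $\mathcal{A} = A^{cl}$ be the closed-loop generator from the Staffans–Weiss theorem satisfying $sC_\Lambda R(s,\mathcal{A})x = sCR(s,A)x + H(s)\,C_\Lambda sR(s,\mathcal{A})x$ for large real $s$ and $x \in D(C_{\Lambda,\mathcal{A}})$. Then the Yosida extension of $C_\Lambda$ with respect to $\mathcal{A}$ is contained in the Yosida extension of $C$ with respect to $A$: $D(C_{\Lambda,\mathcal{A}}) \subset D(C_\Lambda)$ and $C_{\Lambda,\mathcal{A}} x = C_\Lambda x$ for all $x \in D(C_{\Lambda,\mathcal{A}})$. -/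
open MeasureTheory Set Filter

noncomputable section

/-- if the transfer function satisfies `‖H(s)‖ → 0` and the
identity `s C_Λ R(s,𝓐) x = s C R(s,A) x + H(s) (s C_Λ R(s,𝓐) x)` holds,
then the Yosida extension of `C_Λ` with respect to the closed-loop generator
`𝓐` is contained in the Yosida extension `C_Λ` of `C` with respect to `A`,
with the same values. -/
theorem statement18
    {X U : Type*} [NormedAddCommGroup X] [NormedSpace ℂ X] [CompleteSpace X]
    [NormedAddCommGroup U] [NormedSpace ℂ U] [CompleteSpace U]
    (ω : ℝ)
    (D : Submodule ℂ X) (A : ↥D →ₗ[ℂ] X)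
    (DcalA : Submodule ℂ X) (calA : ↥DcalA →ₗ[ℂ] X)
    (RA : ℝ → X →L[ℂ] X) (RcalA : ℝ → X →L[ℂ] X)
    (hRA : ∀ s : ℝ, ω < s → IsResolvent D A (s : ℂ) (RA s))
    (hRcalA : ∀ s : ℝ, ω < s → IsResolvent DcalA calA (s : ℂ) (RcalA s))
    (C : X →ₗ[ℂ] U) (hCgb : GraphBounded D A C)
    (H : ℝ → U →L[ℂ] U)
    (hH0 : Tendsto (fun s : ℝ => ‖H s‖) atTop (nhds 0))
    (hkey : ∀ s : ℝ, ω < s → ∀ x : X, ∀ u : U,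
      Tendsto (fun r : ℝ => (r : ℂ) • C (RA r (RcalA s x))) atTop (nhds u) →
      (s : ℂ) • u = (s : ℂ) • C (RA s x) + H s ((s : ℂ) • u)) :
    ∀ x : X, ∀ y : U,
      (∃ g : ℝ → U,
        (∀ s : ℝ, ω < s →
          Tendsto (fun r : ℝ => (r : ℂ) • C (RA r (RcalA s x))) atTop (nhds (g s))) ∧
        Tendsto (fun s : ℝ => (s : ℂ) • g s) atTop (nhds y)) →
      Tendsto (fun s : ℝ => (s : ℂ) • C (RA s x)) atTop (nhds y) := by
  rintro x y ⟨g, hg, hgy⟩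
  have hHterm : Tendsto (fun s : ℝ => H s ((s : ℂ) • g s)) atTop (nhds 0) := by
    have hb : Tendsto (fun s : ℝ => ‖H s‖ * ‖(s : ℂ) • g s‖) atTop (nhds 0) := by
      have := hH0.mul hgy.norm
      simpa using this
    refine squeeze_zero_norm (fun s => ?_) hb
    exact (H s).le_opNorm _
  have heq : ∀ᶠ s : ℝ in atTop,
      (s : ℂ) • C (RA s x) = (s : ℂ) • g s - H s ((s : ℂ) • g s) := by
    filter_upwards [eventually_gt_atTop ω] with s hs
    have := hkey s hs x (g s) (hg s hs)
    exact eq_sub_of_add_eq this.symm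
  have : Tendsto (fun s : ℝ => (s : ℂ) • g s - H s ((s : ℂ) • g s)) atTop
      (nhds (y - 0)) := hgy.sub hHterm
  rw [sub_zero] at this
  exact this.congr' (heq.mono fun s h => h.symm)
end
end
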